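/- Let T be the weighted shift on l² with weights a_j = 1/2 for j even and a_j = 3/2 for j odd. Then M(T) = S (the unilateral shift, an isometry), T² = (3/4)S², the spectral radius of T is sqrt(3)/2 < 1, and T is not an m-isometry for any m ≥ 1. -/

import Mathlib

/-!
Consecutive weights average to `1` and multiply to `3/4`, so `M(T) = S` and `T² = (3/4) S²`.
As `S` is an isometry, `‖T^(2k)‖ = (3/4)^k`, and Gelfand's formula along the even powers gives
`r(T) = √3/2`. Finally `‖T^k e₀‖² = 2 (3/4)^k - (-3/4)^k`, so by the binomial theorem the
`m`-isometry sum at `e₀` is `2 (1/4)^m - (7/4)^m < 0`.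
-/

noncomputable section

/-- The Hilbert space `ℓ²(ℕ, ℂ)`. -/
abbrev Ell2 := lp (fun _ : ℕ => ℂ) 2

/-- The canonical orthonormal basis of `ℓ²` (indexed from `0`; the paper's index `j ≥ 1`
corresponds to our index `j - 1`). -/
noncomputable def e (j : ℕ) : Ell2 := lp.single 2 j 1

/-- `T` is an `m`-isometry: `∑_{k=0}^m (-1)^k C(m,k) ‖T^k x‖² = 0` for all `x`. -/
def IsMIsometry (T : Ell2 →L[ℂ] Ell2) (m : ℕ) : Prop :=
  ∀ x : Ell2,
    ∑ k ∈ Finset.range (m + 1), (-1 : ℝ) ^ k * (m.choose k : ℝ) * ‖(T ^ k) x‖ ^ 2 = 0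

open Finset

def ell2HilbertBasis : HilbertBasis ℕ ℂ Ell2 :=
  HilbertBasis.ofRepr (LinearIsometryEquiv.refl ℂ Ell2)

@[simp] lemma coe_ell2HilbertBasis : ⇑ell2HilbertBasis = e :=
  funext ell2HilbertBasis.repr_self

lemma orthonormal_e : Orthonormal ℂ e :=
  coe_ell2HilbertBasis ▸ ell2HilbertBasis.orthonormal

lemma norm_e (j : ℕ) : ‖e j‖ = 1 :=
  orthonormal_e.1 j

lemma ext_e {A B : Ell2 →L[ℂ] Ell2} (h : ∀ j, A (e j) = B (e j)) : A = B := by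
  have hdense : Dense (Submodule.span ℂ (Set.range e) : Set Ell2) :=
    Submodule.dense_iff_topologicalClosure_eq_top.mpr
      (coe_ell2HilbertBasis ▸ ell2HilbertBasis.dense_span)
  exact ContinuousLinearMap.ext_on hdense (Set.forall_mem_range.mpr h)

theorem HilbertBasis.norm_map_of_orthonormal {ι 𝕜 E F : Type*} [RCLike 𝕜]
    [NormedAddCommGroup E] [InnerProductSpace 𝕜 E]
    [NormedAddCommGroup F] [InnerProductSpace 𝕜 F] [CompleteSpace F]
    (b : HilbertBasis ι 𝕜 E) (A : E →L[𝕜] F) (hA : Orthonormal 𝕜 (A ∘ b)) (x : E) :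
    ‖A x‖ = ‖x‖ := by
  have h₁ : HasSum (fun i => b.repr x i • A (b i)) (A x) := by
    simpa [Function.comp_def] using (b.hasSum_repr x).map A A.continuous
  have h₂ := hA.orthogonalFamily.hasSum_linearIsometry (b.repr x)
  simp only [Function.comp_apply, LinearIsometry.toSpanSingleton_apply] at h₂
  rw [h₁.unique h₂, LinearIsometry.norm_map, b.repr.norm_map]

theorem norm_pow_eq_one_of_norm_map {𝕜 E : Type*} [NontriviallyNormedField 𝕜]
    [NormedAddCommGroup E] [NormedSpace 𝕜 E] [Nontrivial E] {A : E →L[𝕜] E}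
    (hA : ∀ x, ‖A x‖ = ‖x‖) (n : ℕ) : ‖A ^ n‖ = 1 := by
  have hAn : ∀ x, ‖(A ^ n) x‖ = ‖x‖ := by
    induction n with
    | zero => simp
    | succ n ih => intro x; rw [pow_succ, mul_apply_eq_comp, ih, hA]
  exact (⟨(A ^ n : E →L[𝕜] E), hAn⟩ : E →ₗᵢ[𝕜] E).norm_toContinuousLinearMap

theorem spectralRadius_eq_of_norm_pow_mul {A : Type*} [NormedRing A] [NormedAlgebra ℂ A]
    [CompleteSpace A] (a : A) {n : ℕ} (hn : n ≠ 0) {r : ℝ} (hr : 0 ≤ r)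
    (h : ∀ k, ‖a ^ (n * k)‖ = r ^ (n * k)) : spectralRadius ℂ a = ENNReal.ofReal r := by
  have hmul : Filter.Tendsto (fun k => n * (k + 1)) Filter.atTop Filter.atTop :=
    Filter.tendsto_atTop_mono (fun k => Nat.le_mul_of_pos_left _ (Nat.pos_of_ne_zero hn))
      (Filter.tendsto_add_atTop_nat 1)
  refine tendsto_nhds_unique
    ((spectrum.pow_norm_pow_one_div_tendsto_nhds_spectralRadius a).comp hmul) ?_
  refine tendsto_const_nhds.congr fun k => ?_
  rw [Function.comp_apply, h, ← Real.rpow_natCast, ← Real.rpow_mul hr,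
    mul_one_div_cancel (by positivity), Real.rpow_one]

theorem sum_range_neg_one_pow_mul_choose_mul_pow {R : Type*} [CommRing R] (x : R) (m : ℕ) :
    ∑ k ∈ range (m + 1), (-1) ^ k * (m.choose k : R) * x ^ k = (1 - x) ^ m := by
  rw [sub_eq_neg_add, add_pow]
  refine sum_congr rfl fun k _ => ?_
  rw [neg_pow, one_pow]
  ring

instance : Nontrivial Ell2 :=
  nontrivial_of_ne (e 0) 0 (ne_zero_of_norm_ne_zero (by simp [norm_e]))

theorem weightedShift_pow_apply_e {w : ℕ → ℝ} {T : Ell2 →L[ℂ] Ell2}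
    (hT : ∀ j, T (e j) = (w j : ℂ) • e (j + 1)) (j k : ℕ) :
    (T ^ k) (e j) = ((∏ i ∈ range k, w (j + i) : ℝ) : ℂ) • e (j + k) := by
  induction k with
  | zero => simp
  | succ k ih =>
    rw [pow_succ', mul_apply_eq_comp, ih, map_smul, hT, smul_smul, ← Complex.ofReal_mul,
      ← prod_range_succ]
    rfl

def altWeight (j : ℕ) : ℝ := if Even j then 3 / 2 else 1 / 2

lemma altWeight_add_altWeight_succ (j : ℕ) : altWeight j + altWeight (j + 1) = 2 := by
  by_cases h : Even j <;> simp [altWeight, h, Nat.even_add_one] <;> norm_num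

lemma altWeight_mul_altWeight_succ (j : ℕ) : altWeight j * altWeight (j + 1) = 3 / 4 := by
  by_cases h : Even j <;> simp [altWeight, h, Nat.even_add_one] <;> norm_num

lemma prod_altWeight_sq (k : ℕ) :
    (∏ i ∈ range k, altWeight i) ^ 2 = 2 * (3 / 4) ^ k - (-(3 / 4)) ^ k := by
  induction k with
  | zero => norm_num
  | succ k ih =>
    rcases Nat.even_or_odd k with h | h
    · rw [prod_range_succ, mul_pow, ih, altWeight, if_pos h, h.neg_pow, h.add_one.neg_pow]
      ring
    · rw [prod_range_succ, mul_pow, ih, altWeight, if_neg (Nat.not_even_iff_odd.mpr h),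
        h.neg_pow, h.add_one.neg_pow]
      ring

lemma not_isMIsometry_of_norm_sq_pow_apply {T : Ell2 →L[ℂ] Ell2} {x : Ell2}
    (hx : ∀ k, ‖(T ^ k) x‖ ^ 2 = 2 * (3 / 4) ^ k - (-(3 / 4)) ^ k) {m : ℕ} (hm : 1 ≤ m) :
    ¬ IsMIsometry T m := by
  intro hT
  have hsum : ∑ k ∈ range (m + 1), (-1 : ℝ) ^ k * (m.choose k : ℝ) * ‖(T ^ k) x‖ ^ 2
      = 2 * (1 / 4) ^ m - (7 / 4) ^ m := by
    simp_rw [hx, mul_sub, sum_sub_distrib, mul_left_comm _ (2 : ℝ), ← mul_sum,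
      sum_range_neg_one_pow_mul_choose_mul_pow]
    norm_num
  have h₁ : (1 / 4 : ℝ) ^ m ≤ 1 / 4 := pow_le_of_le_one (by norm_num) (by norm_num) (by omega)
  have h₂ : 1 ≤ (7 / 4 : ℝ) ^ m := one_le_pow₀ (by norm_num)
  linarith [hT x]

/-- the weighted shift with weights `3/2, 1/2, 3/2, 1/2, …` (paper:
`a_j = 1/2` for `j` even, `3/2` for `j` odd, indexed from `1`; our `w j` is the paper's
`a_{j+1}`) has mean transform equal to the unilateral shift `S` (an isometry), satisfies
`T² = (3/4) S²`, has spectral radius `√3/2 < 1`, and is not an `m`-isometry for any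
`m ≥ 1`. -/
theorem counterexample_mean_transform_isometry
    (w : ℕ → ℝ) (hw : ∀ j, w j = if Even j then 3 / 2 else 1 / 2)
    (T S M : Ell2 →L[ℂ] Ell2)
    (hT : ∀ j, T (e j) = ((w j : ℝ) : ℂ) • e (j + 1))
    (hS : ∀ j, S (e j) = e (j + 1))
    (hM : ∀ j, M (e j) = (((w j + w (j + 1)) / 2 : ℝ) : ℂ) • e (j + 1)) :
    M = S ∧ (∀ x : Ell2, ‖S x‖ = ‖x‖) ∧
      T ^ 2 = (3 / 4 : ℂ) • S ^ 2 ∧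
      spectralRadius ℂ T = ENNReal.ofReal (Real.sqrt 3 / 2) ∧
      Real.sqrt 3 / 2 < 1 ∧
      (∀ m : ℕ, 1 ≤ m → ¬ IsMIsometry T m) := by
  obtain rfl : w = altWeight := funext hw
  have hMS : M = S := ext_e fun j => by
    rw [hM, hS, altWeight_add_altWeight_succ]
    norm_num
  have hSiso : ∀ x, ‖S x‖ = ‖x‖ := ell2HilbertBasis.norm_map_of_orthonormal S <| by
    simpa [Function.comp_def, hS] using orthonormal_e.comp _ (add_left_injective 1)
  have hT2 : T ^ 2 = (3 / 4 : ℂ) • S ^ 2 := ext_e fun j => by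
    rw [weightedShift_pow_apply_e hT, smul_apply, sq, mul_apply_eq_comp, hS, hS]
    simp [prod_range_succ, altWeight_mul_altWeight_succ]
  have hT2k : ∀ k, ‖T ^ (2 * k)‖ = (√3 / 2) ^ (2 * k) := fun k => by
    rw [pow_mul, hT2, smul_pow, ← pow_mul, norm_smul, norm_pow_eq_one_of_norm_map hSiso, mul_one,
      pow_mul, div_pow √3, Real.sq_sqrt zero_le_three]
    norm_num
  refine ⟨hMS, hSiso, hT2, spectralRadius_eq_of_norm_pow_mul T two_ne_zero (by positivity) hT2k,
    ?_, fun m hm => not_isMIsometry_of_norm_sq_pow_apply (x := e 0) (fun k => ?_) hm⟩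
  · rw [div_lt_one two_pos, Real.sqrt_lt' two_pos]
    norm_num
  · rw [weightedShift_pow_apply_e hT, norm_smul, norm_e, mul_one, Complex.norm_real,
      Real.norm_eq_abs, sq_abs]
    simpa using prod_altWeight_sq k
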